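/- In the Hecke algebra H_{n,q}, the element x_n := ([n]_q!)⁻¹ · Σ_{w ∈ S_n} T_w is an idempotent, provided [n]_q! is invertible in K. -/

import Mathlib

/-- The Coxeter length of a permutation of `Fin n` (its number of inversions). -/
def permLen {n : ℕ} (w : Equiv.Perm (Fin n)) : ℕ :=
  (Finset.univ.filter fun p : Fin n × Fin n => p.1 < p.2 ∧ w p.2 < w p.1).card

/-- q-integer `[m]_q = 1 + q + ⋯ + q^{m-1}`. -/
def qnat {K : Type*} [Semiring K] (q : K) (m : ℕ) : K := ∑ i ∈ Finset.range m, q ^ i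

/-- q-factorial `[m]_q! = [1]_q [2]_q ⋯ [m]_q`. -/
def qfact {K : Type*} [CommSemiring K] (q : K) (m : ℕ) : K :=
  ∏ i ∈ Finset.range m, qnat q (i + 1)

/-! Put `S = ∑_w T_w`. Pairing `w` with `w s` for an adjacent transposition `s`, the quadratic
relation gives `S T_s = q S`; splitting off a descent then gives `S T_w = q^{ℓ(w)} S` by induction
on `ℓ(w)`, hence `S² = (∑_w q^{ℓ(w)}) S`. Writing `w ∈ S_{n+1}` as the pair `(w 0, e)` with
`e ∈ S_n` splits `ℓ(w)` as `w 0 + ℓ(e)`, so the Poincaré polynomial `∑_w q^{ℓ(w)}` is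
`[n]_q!`. -/

open Finset Equiv

section Length

variable {n : ℕ}

def inversions (w : Perm (Fin n)) : Finset (Fin n × Fin n) :=
  univ.filter fun p ↦ p.1 < p.2 ∧ w p.2 < w p.1

lemma swap_lt_swap_iff_of_adjacent {i j a b : Fin n} (hij : (i : ℕ) + 1 = j)
    (hab : ¬(a = i ∧ b = j)) (hba : ¬(a = j ∧ b = i)) :
    swap i j a < swap i j b ↔ a < b := by
  simp only [Fin.ext_iff] at hab hba
  simp only [swap_apply_def, Fin.lt_def, Fin.ext_iff]
  split_ifs <;> omega

lemma inversions_mul_swap {w : Perm (Fin n)} {i j : Fin n} (hij : (i : ℕ) + 1 = j)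
    (h : w i < w j) :
    inversions (w * swap i j) =
      insert (i, j) ((inversions w).map (prodCongr (swap i j) (swap i j)).toEmbedding) := by
  ext ⟨a, b⟩
  simp only [inversions, Finset.mem_filter]
  simp only [mem_univ, Perm.coe_mul, Function.comp_apply, true_and, mem_insert, Prod.mk.injEq,
    mem_map_equiv, prodCongr_symm, symm_swap, prodCongr_apply, Prod.map_apply, Finset.mem_filter]
  by_cases hab : a = i ∧ b = j
  · obtain ⟨rfl, rfl⟩ := hab
    simp only [swap_apply_left, swap_apply_right, h, and_true, true_or, iff_true]
    rw [Fin.lt_def]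
    omega
  by_cases hba : a = j ∧ b = i
  · obtain ⟨rfl, rfl⟩ := hba
    have hne : a ≠ b := by rintro rfl; omega
    simp [h.le.not_gt, hne]
  rw [swap_lt_swap_iff_of_adjacent hij hab hba]
  simp [hab]

lemma permLen_mul_swap_of_lt {w : Perm (Fin n)} {i j : Fin n} (hij : (i : ℕ) + 1 = j)
    (h : w i < w j) : permLen (w * swap i j) = permLen w + 1 := by
  have hji : (i, j) ∉ (inversions w).map (prodCongr (swap i j) (swap i j)).toEmbedding := by
    simp only [mem_map_equiv, inversions, Finset.mem_filter]
    simp only [prodCongr_symm, symm_swap, prodCongr_apply, Prod.map_apply, swap_apply_left,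
      swap_apply_right, mem_univ, true_and, not_and, not_lt]
    intro hji
    rw [Fin.lt_def] at hji
    omega
  rw [permLen, ← inversions, inversions_mul_swap hij h, card_insert_of_notMem hji, card_map]
  rfl

lemma permLen_mul_swap_of_gt {w : Perm (Fin n)} {i j : Fin n} (hij : (i : ℕ) + 1 = j)
    (h : w j < w i) : permLen w = permLen (w * swap i j) + 1 := by
  simpa [mul_assoc] using permLen_mul_swap_of_lt (w := w * swap i j) hij (by simpa using h)

lemma permLen_one : permLen (1 : Perm (Fin n)) = 0 := by
  rw [permLen, Finset.card_eq_zero, Finset.filter_eq_empty_iff]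
  exact fun p _ h ↦ h.1.not_gt h.2

lemma exists_adjacent_descent {w : Perm (Fin n)} (hw : w ≠ 1) :
    ∃ i j : Fin n, (i : ℕ) + 1 = j ∧ w j < w i := by
  by_contra! h
  cases n with
  | zero => exact hw (Subsingleton.elim _ _)
  | succ m =>
    have hmono : StrictMono w := Fin.strictMono_iff_lt_succ.2 fun k ↦
      (h _ _ (by simp)).lt_of_ne (w.injective.ne (by simp [Fin.ext_iff]))
    exact hw (Equiv.ext (congrFun hmono.eq_id))

end Length

section PoincarePolynomial

variable {n : ℕ}

lemma permLen_eq_sum (w : Perm (Fin n)) :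
    permLen w = ∑ a, ∑ b, if a < b ∧ w b < w a then 1 else 0 := by
  rw [permLen, card_filter, ← univ_product_univ, sum_product]

def permCons (k : Fin (n + 1)) (e : Perm (Fin n)) : Perm (Fin (n + 1)) :=
  (finSuccEquiv n).trans ((optionCongr e).trans (finSuccEquiv' k).symm)

@[simp] lemma permCons_zero (k : Fin (n + 1)) (e : Perm (Fin n)) : permCons k e 0 = k := by
  simp [permCons]

@[simp] lemma permCons_succ (k : Fin (n + 1)) (e : Perm (Fin n)) (i : Fin n) :
    permCons k e i.succ = k.succAbove (e i) := by
  simp [permCons]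

lemma sum_castSucc_lt (k : Fin (n + 1)) :
    ∑ c : Fin n, (if c.castSucc < k then 1 else 0) = (k : ℕ) := by
  simp only [← card_filter, Fin.lt_def, Fin.val_castSucc, Fin.card_filter_val_lt]
  omega

lemma permLen_permCons (k : Fin (n + 1)) (e : Perm (Fin n)) :
    permLen (permCons k e) = k + permLen e := by
  rw [permLen_eq_sum, permLen_eq_sum]
  simp only [Fin.sum_univ_succ, permCons_zero, permCons_succ, Fin.succ_lt_succ_iff,
    Fin.succAbove_lt_succAbove_iff, Fin.succAbove_lt_iff_castSucc_lt, false_and, if_false,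
    Fin.succ_pos, true_and, Fin.not_lt_zero, zero_add]
  rw [Equiv.sum_comp e fun c ↦ if c.castSucc < k then 1 else 0, sum_castSucc_lt]

lemma permCons_bijective :
    Function.Bijective fun p : Fin (n + 1) × Perm (Fin n) ↦ permCons p.1 p.2 := by
  refine (Fintype.bijective_iff_injective_and_card _).2
    ⟨?_, by simp [Fintype.card_perm, Nat.factorial_succ]⟩
  rintro ⟨k, e⟩ ⟨k', e'⟩ h
  have hk : k = k' := by simpa using DFunLike.congr_fun h 0
  subst hk
  have he : e = e' := Equiv.ext fun i ↦ by simpa using DFunLike.congr_fun h i.succ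
  rw [he]

theorem sum_pow_permLen {K : Type*} [CommSemiring K] (q : K) :
    ∀ n, ∑ w : Perm (Fin n), q ^ permLen w = qfact q n
  | 0 => by simp [qfact, Subsingleton.elim _ (1 : Perm (Fin 0)), permLen_one]
  | n + 1 => calc
      ∑ w : Perm (Fin (n + 1)), q ^ permLen w
          = ∑ p : Fin (n + 1) × Perm (Fin n), q ^ permLen (permCons p.1 p.2) :=
        (Fintype.sum_bijective _ permCons_bijective _ _ fun _ ↦ rfl).symm
      _ = (∑ k : Fin (n + 1), q ^ (k : ℕ)) * ∑ e : Perm (Fin n), q ^ permLen e := by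
        simp only [Fintype.sum_prod_type, permLen_permCons, pow_add, sum_mul_sum]
      _ = qfact q (n + 1) := by
        rw [sum_pow_permLen q n, Fin.sum_univ_eq_sum_range, qfact, qfact, prod_range_succ,
          mul_comm, qnat]

end PoincarePolynomial

lemma sum_perm_eq_sum_filter_add_mul_swap {α M : Type*} [Fintype α] [LinearOrder α]
    [AddCommMonoid M] (f : Perm α → M) {i j : α} (hij : i ≠ j) :
    ∑ w, f w = ∑ w with w i < w j, (f w + f (w * swap i j)) := by
  rw [sum_add_distrib, ← sum_filter_add_sum_filter_not univ fun w ↦ w i < w j]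
  congr 1
  have hlt (w : Perm α) : ¬w i < w j ↔ w j < w i := by
    rw [not_lt, (w.injective.ne hij).symm.le_iff_lt]
  refine sum_nbij' (· * swap i j) (· * swap i j) ?_ ?_ ?_ ?_ ?_ <;>
    simp [mul_assoc, hlt]

section Hecke

variable {K A : Type*} [CommRing K] [Ring A] [Algebra K A] {n : ℕ}

def HeckeMulRule (q : K) (T : Perm (Fin n) → A) : Prop :=
  ∀ (w : Perm (Fin n)) (i j : Fin n), (i : ℕ) + 1 = j →
    T w * T (swap i j) =
      if permLen (w * swap i j) = permLen w + 1 then T (w * swap i j)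
      else (q - 1) • T w + q • T (w * swap i j)

variable {q : K} {T : Perm (Fin n) → A}

lemma HeckeMulRule.mul_swap_of_lt (hT : HeckeMulRule q T) {w : Perm (Fin n)} {i j : Fin n}
    (hij : (i : ℕ) + 1 = j) (h : w i < w j) : T w * T (swap i j) = T (w * swap i j) := by
  rw [hT w i j hij, if_pos (permLen_mul_swap_of_lt hij h)]

lemma HeckeMulRule.mul_swap_mul_swap_of_lt (hT : HeckeMulRule q T) {w : Perm (Fin n)}
    {i j : Fin n} (hij : (i : ℕ) + 1 = j) (h : w i < w j) :
    T (w * swap i j) * T (swap i j) = (q - 1) • T (w * swap i j) + q • T w := by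
  have hlen := permLen_mul_swap_of_lt hij h
  rw [hT _ i j hij, mul_swap_mul_self, if_neg (by omega)]

lemma HeckeMulRule.sum_mul_swap (hT : HeckeMulRule q T) {i j : Fin n}
    (hij : (i : ℕ) + 1 = j) : (∑ w, T w) * T (swap i j) = q • ∑ w, T w := by
  have hne : i ≠ j := by rintro rfl; omega
  rw [sum_mul, sum_perm_eq_sum_filter_add_mul_swap _ hne,
    sum_perm_eq_sum_filter_add_mul_swap _ hne, smul_sum]
  refine sum_congr rfl fun w hw ↦ ?_
  rw [mem_filter] at hw
  rw [hT.mul_swap_of_lt hij hw.2, hT.mul_swap_mul_swap_of_lt hij hw.2, sub_smul, one_smul,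
    smul_add]
  abel

theorem HeckeMulRule.sum_mul (hT : HeckeMulRule q T) (hone : T 1 = 1) (w : Perm (Fin n)) :
    (∑ u, T u) * T w = q ^ permLen w • ∑ u, T u := by
  by_cases hw : w = 1
  · rw [hw, hone, mul_one, permLen_one, pow_zero, one_smul]
  obtain ⟨i, j, hij, hdesc⟩ := exists_adjacent_descent hw
  have hlen := permLen_mul_swap_of_gt hij hdesc
  have hw' : T (w * swap i j) * T (swap i j) = T w := by
    simpa using hT.mul_swap_of_lt (w := w * swap i j) hij (by simpa using hdesc)
  rw [← hw', ← mul_assoc, hT.sum_mul hone, smul_mul_assoc, hT.sum_mul_swap hij, smul_smul, hlen,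
    pow_succ]
termination_by permLen w
decreasing_by omega

theorem HeckeMulRule.sum_mul_sum (hT : HeckeMulRule q T) (hone : T 1 = 1) :
    (∑ w, T w) * (∑ w, T w) = qfact q n • ∑ w, T w := by
  simp only [mul_sum, hT.sum_mul hone, ← sum_smul, sum_pow_permLen]

end Hecke

theorem stmt_2_general {K : Type*} [Field K] (q : K) (n : ℕ)
    {A : Type*} [Ring A] [Algebra K A]
    (T : Equiv.Perm (Fin n) → A)
    (hone : T 1 = 1)
    (hmul : ∀ (w : Equiv.Perm (Fin n)) (i j : Fin n), (i : ℕ) + 1 = j →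
      T w * T (Equiv.swap i j) =
        if permLen (w * Equiv.swap i j) = permLen w + 1 then T (w * Equiv.swap i j)
        else (q - 1) • T w + q • T (w * Equiv.swap i j))
    (hfact : qfact q n ≠ 0) :
    ((qfact q n)⁻¹ • ∑ w : Equiv.Perm (Fin n), T w) *
        ((qfact q n)⁻¹ • ∑ w : Equiv.Perm (Fin n), T w) =
      (qfact q n)⁻¹ • ∑ w : Equiv.Perm (Fin n), T w := by
  rw [smul_mul_smul_comm, HeckeMulRule.sum_mul_sum hmul hone, smul_smul, mul_assoc,
    inv_mul_cancel₀ hfact, mul_one]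

/-- in the Hecke algebra `H_{n,q}` — modelled as an algebra `A` with a
basis `{T_w : w ∈ S_n}` satisfying `T_1 = 1` and the usual multiplication rule
`T_w T_{s_i} = T_{w s_i}` if `ℓ(w s_i) = ℓ(w)+1`, and `T_w T_{s_i} = (q-1) T_w + q T_{w s_i}`
otherwise — the element `x_n = ([n]_q!)⁻¹ Σ_w T_w` is an idempotent,
provided `[n]_q!` is invertible. -/
theorem stmt_2 {K : Type*} [Field K] (q : K) (n : ℕ)
    {A : Type*} [Ring A] [Algebra K A]
    (T : Equiv.Perm (Fin n) → A)
    (hbasis : LinearIndependent K T)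
    (hone : T 1 = 1)
    (hmul : ∀ (w : Equiv.Perm (Fin n)) (i j : Fin n), (i : ℕ) + 1 = j →
      T w * T (Equiv.swap i j) =
        if permLen (w * Equiv.swap i j) = permLen w + 1 then T (w * Equiv.swap i j)
        else (q - 1) • T w + q • T (w * Equiv.swap i j))
    (hfact : qfact q n ≠ 0) :
    ((qfact q n)⁻¹ • ∑ w : Equiv.Perm (Fin n), T w) *
        ((qfact q n)⁻¹ • ∑ w : Equiv.Perm (Fin n), T w) =
      (qfact q n)⁻¹ • ∑ w : Equiv.Perm (Fin n), T w :=
  stmt_2_general q n T hone hmul hfact
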